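/- arXiv:1903.05341 — 7 statements merged into one kernel-verified Lean document; each statement's English description precedes it below -/
import Mathlib

section
/- Let G be a simple graph on a finite vertex set and let NM(G) = A·L be its neighbourhood matrix. Then for every pair of adjacent vertices i and j, NM(G)[i,j] = |N(j) \ N(i)|, the number of neighbours of j that are not neighbours of i. -/
open SimpleGraph Matrix Finset

namespace SimpleGraph

variable {V : Type*} [Fintype V] [DecidableEq V] (G : SimpleGraph V) [DecidableRel G.Adj]

theorem adjMatrix_mul_self_apply {R : Type*} [NonAssocSemiring R] (i j : V) :
    (G.adjMatrix R * G.adjMatrix R) i j = #(G.neighborFinset i ∩ G.neighborFinset j) := by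
  simp only [adjMatrix_mul_apply, adjMatrix_apply, sum_boole, ← filter_mem_eq_inter,
    mem_neighborFinset, adj_comm]

theorem adjMatrix_mul_degMatrix_apply {R : Type*} [NonAssocSemiring R] (i j : V) :
    (G.adjMatrix R * G.degMatrix R) i j = if G.Adj i j then (G.degree j : R) else 0 := by
  simp [degMatrix, mul_diagonal, adjMatrix_apply]

theorem adjMatrix_mul_lapMatrix_apply {R : Type*} [Ring R] (i j : V) :
    (G.adjMatrix R * G.lapMatrix R) i j =
      (if G.Adj i j then (G.degree j : R) else 0) -
        #(G.neighborFinset i ∩ G.neighborFinset j) := by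
  rw [lapMatrix, Matrix.mul_sub, Matrix.sub_apply, adjMatrix_mul_degMatrix_apply,
    adjMatrix_mul_self_apply]

end SimpleGraph

theorem nm_adj_entry {V : Type*} [Fintype V] [DecidableEq V] (G : SimpleGraph V)
    [DecidableRel G.Adj] (i j : V) (hij : G.Adj i j) :
    (G.adjMatrix ℤ * G.lapMatrix ℤ) i j =
      ((G.neighborFinset j \ G.neighborFinset i).card : ℤ) := by
  have hdeg : #(G.neighborFinset j \ G.neighborFinset i) +
      #(G.neighborFinset i ∩ G.neighborFinset j) = G.degree j := by
    rw [inter_comm, card_sdiff_add_card_inter, card_neighborFinset_eq_degree]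
  rw [adjMatrix_mul_lapMatrix_apply, if_pos hij, ← hdeg]
  push_cast
  ring
end

section
/- Let G be a simple graph on a finite vertex set and let NM(G) = A·L be its neighbourhood matrix. Then NM(G) is a symmetric matrix if and only if every connected component of G is regular, i.e., if and only if any two vertices i and j that are joined by a walk in G have equal degrees. -/
open SimpleGraph Matrix Finset

theorem nm_isSymm_iff_components_regular {V : Type*} [Fintype V] [DecidableEq V]
    (G : SimpleGraph V) [DecidableRel G.Adj] :
    (G.adjMatrix ℤ * G.lapMatrix ℤ).IsSymm ↔
      ∀ i j : V, G.Reachable i j → G.degree i = G.degree j := by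
  have hentry : ∀ i j : V, (G.adjMatrix ℤ * G.degMatrix ℤ) i j
      = (if G.Adj i j then (G.degree j : ℤ) else 0) := by
    intro i j
    rw [degMatrix, Matrix.mul_diagonal]
    simp [adjMatrix_apply, ite_mul]
  have key : (G.adjMatrix ℤ * G.lapMatrix ℤ).IsSymm ↔
      ∀ i j : V, G.Adj i j → G.degree i = G.degree j := by
    rw [lapMatrix, mul_sub]
    have hAA : (G.adjMatrix ℤ * G.adjMatrix ℤ).IsSymm := by
      unfold Matrix.IsSymm
      rw [Matrix.transpose_mul, (isSymm_adjMatrix G : _)]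
    constructor
    · intro h i j hij
      have h2 : (G.adjMatrix ℤ * G.degMatrix ℤ).IsSymm := by
        have := h.add hAA
        simpa using this
      have := congrFun (congrFun h2 j) i
      rw [Matrix.transpose_apply] at this
      rw [hentry, hentry] at this
      simp only [hij, hij.symm, if_true] at this
      exact_mod_cast this.symm
    · intro h
      have h2 : (G.adjMatrix ℤ * G.degMatrix ℤ).IsSymm := by
        ext i j
        rw [Matrix.transpose_apply, hentry, hentry]
        by_cases hij : G.Adj i j
        · simp [hij, hij.symm, h i j hij]
        · have hji : ¬ G.Adj j i := fun hji => hij hji.symm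
          simp [hij, hji]
      exact h2.sub hAA
  rw [key]
  constructor
  · intro h i j hr
    obtain ⟨w⟩ := hr
    induction w with
    | nil => rfl
    | cons hadj _ ih => exact (h _ _ hadj).trans ih
  · intro h i j hij
    exact h i j hij.reachable
end

section
/- Let G be a simple graph on a finite vertex set and let NM(G) = A·L be its neighbourhood matrix. If there exists a vertex i such that the i-th row of NM(G) has no zero entries, then G is connected and has diameter at most 4, i.e., every pair of vertices is joined by a walk of length at most 4. -/
open SimpleGraph Matrix Finset

theorem nm_row_no_zero_diameter_le_four {V : Type*} [Fintype V] [DecidableEq V]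
    (G : SimpleGraph V) [DecidableRel G.Adj]
    (h : ∃ i : V, ∀ j : V, (G.adjMatrix ℤ * G.lapMatrix ℤ) i j ≠ 0) :
    G.Connected ∧ ∀ u v : V, ∃ w : G.Walk u v, w.length ≤ 4 := by
  obtain ⟨i, hi⟩ := h
  have key : ∀ j : V, ∃ w : G.Walk i j, w.length ≤ 2 := by
    intro j
    have hj := hi j
    rw [Matrix.mul_apply] at hj
    obtain ⟨k, _, hk⟩ := Finset.exists_ne_zero_of_sum_ne_zero hj
    have hA : G.Adj i k := by
      by_contra hna
      simp [SimpleGraph.adjMatrix_apply, hna] at hk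
    by_cases hkj : k = j
    · subst hkj
      exact ⟨hA.toWalk, by simp⟩
    · have hL : G.Adj k j := by
        by_contra hnb
        simp [SimpleGraph.lapMatrix, SimpleGraph.degMatrix,
          SimpleGraph.adjMatrix_apply, hkj, hnb] at hk
      exact ⟨hA.toWalk.append hL.toWalk, by simp⟩
  have hw : ∀ u v : V, ∃ w : G.Walk u v, w.length ≤ 4 := by
    intro u v
    obtain ⟨w1, h1⟩ := key u
    obtain ⟨w2, h2⟩ := key v
    exact ⟨w1.reverse.append w2, by simp; omega⟩
  refine ⟨?_, hw⟩
  rw [SimpleGraph.connected_iff]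
  exact ⟨fun u v => (hw u v).elim fun w _ => w.reachable, ⟨i⟩⟩
end

section
/- Let G be a simple graph on a finite vertex set and let NM(G) = A·L be its neighbourhood matrix. Then G is triangle-free (contains no 3-clique) if and only if for every pair of adjacent vertices i and j one has NM(G)[i,j] = −NM(G)[j,j] (equivalently, NM(G)[i,j] equals the absolute value of the diagonal entry NM(G)[j,j]). -/
open SimpleGraph Matrix Finset

theorem triangle_free_iff_nm {V : Type*} [Fintype V] [DecidableEq V]
    (G : SimpleGraph V) [DecidableRel G.Adj] :
    G.CliqueFree 3 ↔
      ∀ i j : V, G.Adj i j →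
        (G.adjMatrix ℤ * G.lapMatrix ℤ) i j = -((G.adjMatrix ℤ * G.lapMatrix ℤ) j j) := by
  have key : ∀ i j : V, (G.adjMatrix ℤ * G.lapMatrix ℤ) i j
      = (G.adjMatrix ℤ) i j * G.degree j - (G.adjMatrix ℤ * G.adjMatrix ℤ) i j := by
    intro i j
    rw [lapMatrix, degMatrix, Matrix.mul_sub, Matrix.sub_apply, Matrix.mul_diagonal]
  have diag : ∀ j : V, (G.adjMatrix ℤ * G.lapMatrix ℤ) j j = -(G.degree j) := by
    intro j
    rw [key, adjMatrix_mul_self_apply_self]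
    simp
  constructor
  · intro hcf i j hij
    rw [key, diag, neg_neg]
    have h2 : (G.adjMatrix ℤ * G.adjMatrix ℤ) i j = 0 := by
      rw [Matrix.mul_apply]
      refine Finset.sum_eq_zero fun k _ => ?_
      by_cases hik : G.Adj i k
      · by_cases hkj : G.Adj k j
        · exact absurd (is3Clique_triple_iff.2 ⟨hij, hik, hkj.symm⟩) (hcf _)
        · simp [hkj]
      · simp [hik]
    simp [h2, hij]
  · intro h
    rintro s hs
    obtain ⟨a, b, c, hab, hac, hbc, rfl⟩ := is3Clique_iff.1 hs
    have := h a b hab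
    rw [key, diag, neg_neg, adjMatrix_apply, if_pos hab] at this
    have h2 : (G.adjMatrix ℤ * G.adjMatrix ℤ) a b = 0 := by linarith
    rw [Matrix.mul_apply] at h2
    have hmem : (0:ℤ) < ∑ k, (G.adjMatrix ℤ) a k * (G.adjMatrix ℤ) k b := by
      refine Finset.sum_pos' (fun k _ => ?_) ⟨c, Finset.mem_univ c, ?_⟩
      · by_cases h1 : G.Adj a k <;> by_cases h2 : G.Adj k b <;> simp [h1, h2]
      · simp [hac, hbc.symm]
    omega
end

section
/- Let G be a simple graph on a finite vertex set and let NM(G) = A·L be its neighbourhood matrix. Then NM(G)[i,j] ≥ −1 for all distinct non-adjacent pairs of vertices i, j if and only if G contains no 4-cycle through a non-adjacent diagonal pair, i.e., if and only if there exist no vertices a, b, c, d with a adjacent to b, b adjacent to c, c adjacent to d, d adjacent to a, b ≠ d, and a, c distinct and non-adjacent. -/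
open SimpleGraph Matrix Finset

lemma nm_entry_eq_neg_common {V : Type*} [Fintype V] [DecidableEq V]
    (G : SimpleGraph V) [DecidableRel G.Adj] {i j : V} (hij : ¬ G.Adj i j) :
    (G.adjMatrix ℤ * G.lapMatrix ℤ) i j =
      -((Finset.univ.filter (fun k => G.Adj i k ∧ G.Adj k j)).card : ℤ) := by
  rw [SimpleGraph.adjMatrix_mul_apply]
  simp only [lapMatrix, degMatrix, Matrix.sub_apply, Matrix.diagonal_apply]
  rw [Finset.sum_sub_distrib]
  have h0 : ∑ k ∈ G.neighborFinset i, (if k = j then (G.degree k : ℤ) else 0) = 0 := by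
    apply Finset.sum_eq_zero
    intro k hk
    rw [if_neg]
    rintro rfl
    exact hij ((G.mem_neighborFinset i k).mp hk)
  rw [h0, zero_sub, neg_inj]
  have : (Finset.univ.filter (fun k => G.Adj i k ∧ G.Adj k j)) =
      (G.neighborFinset i).filter (fun k => G.Adj k j) := by
    ext k
    simp [SimpleGraph.mem_neighborFinset]
  rw [this]
  simp only [SimpleGraph.adjMatrix_apply]
  rw [Finset.sum_boole]

theorem nm_ge_neg_one_iff_no_C4_through_nonadjacent_pair {V : Type*} [Fintype V]
    [DecidableEq V] (G : SimpleGraph V) [DecidableRel G.Adj] :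
    (∀ i j : V, i ≠ j → ¬ G.Adj i j → -1 ≤ (G.adjMatrix ℤ * G.lapMatrix ℤ) i j) ↔
      ¬ ∃ a b c d : V, G.Adj a b ∧ G.Adj b c ∧ G.Adj c d ∧ G.Adj d a ∧
        b ≠ d ∧ a ≠ c ∧ ¬ G.Adj a c := by
  constructor
  · rintro h ⟨a, b, c, d, hab, hbc, hcd, hda, hbd, hac, hnac⟩
    have hb : b ∈ Finset.univ.filter (fun k => G.Adj a k ∧ G.Adj k c) := by
      simp [hab, hbc]
    have hd : d ∈ Finset.univ.filter (fun k => G.Adj a k ∧ G.Adj k c) := by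
      simp [hda.symm, hcd.symm]
    have hcard : 2 ≤ (Finset.univ.filter (fun k => G.Adj a k ∧ G.Adj k c)).card := by
      have := Finset.one_lt_card.mpr ⟨b, hb, d, hd, hbd⟩
      omega
    have := h a c hac hnac
    rw [nm_entry_eq_neg_common G hnac] at this
    omega
  · intro h i j hij hnadj
    rw [nm_entry_eq_neg_common G hnadj]
    by_contra hc
    push_neg at hc
    have hcard : 1 < (Finset.univ.filter (fun k => G.Adj i k ∧ G.Adj k j)).card := by
      omega
    obtain ⟨b, hb, d, hd, hbd⟩ := Finset.one_lt_card.mp hcard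
    simp only [Finset.mem_filter, Finset.mem_univ, true_and] at hb hd
    exact h ⟨i, b, j, d, hb.1, hb.2, hd.2.symm, hd.1.symm, hbd, hij, hnadj⟩
end

section
/- Let G be a simple graph on a finite vertex set and let NM(G) = A·L be its neighbourhood matrix. If NM(G)[i,j] ≥ −1 for every pair of distinct non-adjacent vertices i and j, then G contains no induced 4-cycle; that is, there exist no four distinct vertices a, b, c, d with a adjacent to b, b adjacent to c, c adjacent to d, d adjacent to a, a not adjacent to c, and b not adjacent to d. -/
open SimpleGraph Matrix Finset

theorem nm_ge_neg_one_no_induced_C4 {V : Type*} [Fintype V] [DecidableEq V]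
    (G : SimpleGraph V) [DecidableRel G.Adj]
    (h : ∀ i j : V, i ≠ j → ¬ G.Adj i j → -1 ≤ (G.adjMatrix ℤ * G.lapMatrix ℤ) i j) :
    ¬ ∃ a b c d : V, a ≠ b ∧ a ≠ c ∧ a ≠ d ∧ b ≠ c ∧ b ≠ d ∧ c ≠ d ∧
      G.Adj a b ∧ G.Adj b c ∧ G.Adj c d ∧ G.Adj d a ∧
      ¬ G.Adj a c ∧ ¬ G.Adj b d := by
  rintro ⟨a, b, c, d, hab', hac', had', hbc', hbd', hcd',
    hab, hbc, hcd, hda, hac, hbd⟩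
  have h1 := h a c hac' hac
  have key : (G.adjMatrix ℤ * G.lapMatrix ℤ) a c
      = - ∑ k ∈ G.neighborFinset a, G.adjMatrix ℤ k c := by
    rw [lapMatrix, Matrix.mul_sub, Matrix.sub_apply, degMatrix, Matrix.mul_diagonal,
      SimpleGraph.adjMatrix_mul_apply]
    simp [hac]
  rw [key] at h1
  have h2 : (∑ k ∈ G.neighborFinset a, G.adjMatrix ℤ k c) ≤ 1 := by linarith
  have hsub : ({b, d} : Finset V) ⊆ G.neighborFinset a := by
    intro x hx
    simp only [Finset.mem_insert, Finset.mem_singleton] at hx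
    rcases hx with rfl | rfl
    · simpa using hab
    · simpa using hda.symm
  have hmono : (∑ k ∈ ({b, d} : Finset V), G.adjMatrix ℤ k c)
      ≤ ∑ k ∈ G.neighborFinset a, G.adjMatrix ℤ k c := by
    apply Finset.sum_le_sum_of_subset_of_nonneg hsub
    intro k _ _
    simp [SimpleGraph.adjMatrix_apply]
    split <;> norm_num
  rw [Finset.sum_pair hbd'] at hmono
  simp only [SimpleGraph.adjMatrix_apply, if_pos hbc, if_pos hcd.symm] at hmono
  simp only [SimpleGraph.adjMatrix_apply] at h2
  linarith
end

section
/- Let G be a simple graph on a finite vertex set and let NM(G) = A·L be its neighbourhood matrix. Then the girth of G is at least 5 if and only if NM(G)[i,j] = −NM(G)[j,j] for every pair of adjacent vertices i, j, and NM(G)[i,j] ≥ −1 for every pair of distinct non-adjacent vertices i, j. -/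
open SimpleGraph Matrix Finset

private lemma nm_apply {V : Type*} [Fintype V] [DecidableEq V]
    (G : SimpleGraph V) [DecidableRel G.Adj] (i j : V) :
    (G.adjMatrix ℤ * G.lapMatrix ℤ) i j =
      (if G.Adj i j then (G.degree j : ℤ) else 0)
        - ((G.neighborFinset i ∩ G.neighborFinset j).card : ℤ) := by
  rw [adjMatrix_mul_apply]
  simp only [lapMatrix, degMatrix, Matrix.sub_apply, Matrix.diagonal_apply, adjMatrix_apply]
  rw [Finset.sum_sub_distrib]
  congr 1
  · rw [Finset.sum_ite_eq']
    simp [mem_neighborFinset]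
  · have h : G.neighborFinset i ∩ G.neighborFinset j
        = (G.neighborFinset i).filter (fun u => G.Adj u j) := by
      ext u
      simp [mem_neighborFinset, adj_comm]
    rw [h, ← Finset.sum_boole]

private lemma short_cycle {V : Type*} [Fintype V] [DecidableEq V]
    (G : SimpleGraph V) [DecidableRel G.Adj]
    (a : V) (w : G.Walk a a) (hw : w.IsCycle) (hlt : w.length < 5) :
    (∃ i j k : V, G.Adj i j ∧ G.Adj i k ∧ G.Adj j k) ∨
    (∃ i j b d : V, i ≠ j ∧ ¬ G.Adj i j ∧ b ≠ d ∧
      G.Adj i b ∧ G.Adj j b ∧ G.Adj i d ∧ G.Adj j d) := by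
  match w, hw, hlt with
  | .nil, hw, _ => exact absurd rfl hw.ne_nil
  | .cons _ .nil, hw, _ => simpa using hw.three_le_length
  | .cons _ (.cons _ .nil), hw, _ => simpa using hw.three_le_length
  | .cons h₁ (.cons h₂ (.cons h₃ .nil)), hw, _ =>
    exact Or.inl ⟨_, _, _, h₁, h₃.symm, h₂⟩
  | .cons (v := b) h₁ (.cons (v := c) h₂ (.cons (v := d) h₃ (.cons h₄ .nil))), hw, _ =>
    by_cases hac : G.Adj a c
    · exact Or.inl ⟨a, c, b, hac, h₁, h₂.symm⟩
    · have hnd := hw.support_nodup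
      simp [Walk.support_cons, List.nodup_cons] at hnd
      refine Or.inr ⟨a, c, b, d, ?_, hac, ?_, h₁, h₂.symm, h₄.symm, h₃⟩
      · exact fun h => hnd.2.1.2 h.symm
      · exact hnd.1.2.1
  | .cons _ (.cons _ (.cons _ (.cons _ (.cons _ p)))), _, hlt =>
    simp [Walk.length_cons] at hlt
    omega

private lemma no_five_of_triangle {V : Type*} [Fintype V] [DecidableEq V]
    {G : SimpleGraph V} [DecidableRel G.Adj] {i j k : V}
    (hij : G.Adj i j) (hik : G.Adj i k) (hjk : G.Adj j k) :
    ¬ (5 ≤ G.egirth) := by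
  intro h
  have hc : (Walk.cons hij (Walk.cons hjk (Walk.cons hik.symm Walk.nil))).IsCycle := by
    rw [Walk.cons_isCycle_iff]
    constructor
    · simp [Walk.isPath_def, hjk.ne, hij.ne', hik.ne']
    · simp [hij.ne, hij.ne', hik.ne, hik.ne', hjk.ne, hjk.ne']
  have := le_egirth.mp h i _ hc
  norm_num [Walk.length_cons] at this

private lemma no_five_of_square {V : Type*} [Fintype V] [DecidableEq V]
    {G : SimpleGraph V} [DecidableRel G.Adj] {i j b d : V}
    (hij : i ≠ j) (hbd : b ≠ d) (hib : G.Adj i b) (hjb : G.Adj j b)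
    (hid : G.Adj i d) (hjd : G.Adj j d) :
    ¬ (5 ≤ G.egirth) := by
  intro h
  have hc : (Walk.cons hib (Walk.cons hjb.symm
      (Walk.cons hjd (Walk.cons hid.symm Walk.nil)))).IsCycle := by
    rw [Walk.cons_isCycle_iff]
    constructor
    · simp [Walk.isPath_def, hjb.ne', hbd, hib.ne', hjd.ne, hij.symm, hid.ne']
    · simp [hib.ne, hib.ne', hij, hij.symm, hid.ne, hid.ne', hbd, hbd.symm,
        hjb.ne, hjb.ne', hjd.ne, hjd.ne']
  have := le_egirth.mp h i _ hc
  norm_num [Walk.length_cons] at this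

theorem girth_ge_five_iff_nm {V : Type*} [Fintype V] [DecidableEq V]
    (G : SimpleGraph V) [DecidableRel G.Adj] :
    5 ≤ G.egirth ↔
      ((∀ i j : V, G.Adj i j →
          (G.adjMatrix ℤ * G.lapMatrix ℤ) i j = -((G.adjMatrix ℤ * G.lapMatrix ℤ) j j)) ∧
       (∀ i j : V, i ≠ j → ¬ G.Adj i j →
          -1 ≤ (G.adjMatrix ℤ * G.lapMatrix ℤ) i j)) := by
  constructor
  · intro h
    constructor
    · intro i j hij
      have hempty : G.neighborFinset i ∩ G.neighborFinset j = ∅ := by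
        by_contra hne
        obtain ⟨k, hk⟩ := Finset.nonempty_iff_ne_empty.2 hne
        rw [Finset.mem_inter, mem_neighborFinset, mem_neighborFinset] at hk
        exact no_five_of_triangle hij hk.1 hk.2 h
      rw [nm_apply, nm_apply, hempty]
      simp [hij, Finset.inter_self, card_neighborFinset_eq_degree]
    · intro i j hne hnadj
      have hcard : (G.neighborFinset i ∩ G.neighborFinset j).card ≤ 1 := by
        by_contra hc
        push_neg at hc
        obtain ⟨b, hb, d, hd, hbd⟩ := Finset.one_lt_card.mp hc
        rw [Finset.mem_inter, mem_neighborFinset, mem_neighborFinset] at hb hd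
        exact no_five_of_square hne hbd hb.1 hb.2 hd.1 hd.2 h
      rw [nm_apply]
      simp only [hnadj, if_false]
      omega
  · rintro ⟨h1, h2⟩
    rw [le_egirth]
    intro a w hw
    by_contra hlt
    push_neg at hlt
    have hlt' : w.length < 5 := by exact_mod_cast hlt
    obtain ⟨i, j, k, hij, hik, hjk⟩ | ⟨i, j, b, d, hne, hnadj, hbd, hib, hjb, hid, hjd⟩ :=
      short_cycle G a w hw hlt'
    · have heq := h1 i j hij
      rw [nm_apply, nm_apply] at heq
      simp [hij, Finset.inter_self, card_neighborFinset_eq_degree] at heq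
      have hk : k ∈ G.neighborFinset i ∩ G.neighborFinset j := by
        simp [Finset.mem_inter, mem_neighborFinset, hik, hjk]
      rw [heq] at hk
      simp at hk
    · have hle := h2 i j hne hnadj
      rw [nm_apply] at hle
      simp only [hnadj, if_false] at hle
      have hb : b ∈ G.neighborFinset i ∩ G.neighborFinset j := by
        simp [Finset.mem_inter, mem_neighborFinset, hib, hjb]
      have hd : d ∈ G.neighborFinset i ∩ G.neighborFinset j := by
        simp [Finset.mem_inter, mem_neighborFinset, hid, hjd]
      have h2c : 1 < (G.neighborFinset i ∩ G.neighborFinset j).card :=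
        Finset.one_lt_card.mpr ⟨b, hb, d, hd, hbd⟩
      omega
end
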